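/- (BEC-bound for H_α^A.) Fix α > 0, α ≠ 1, and suppose that for every fixed y ∈ I_α^A the map x ↦ κ_α^A(x,y) is convex on I_α^A, and likewise in the second argument for every fixed first argument. Write K_i = K_α^A(X_i|Y_i) and δ = δ_α^A = 2^{(1-α)/α}. Then: if α > 1, H_α^A(X_1+X_2|Y_1Y_2) ≥ (α/(1-α))·log( (δ − K_1)(δ − K_2)/(1 − δ) + δ ); and if α < 1, H_α^A(X_1+X_2|Y_1Y_2) ≤ (α/(1-α))·log( (δ − K_1)(δ − K_2)/(1 − δ) + δ ). If instead κ_α^A is concave in each argument, the two inequalities hold with ≤ and ≥ exchanged. -/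

import Mathlib

open Real

noncomputable section

/-- Binary convolution `a∗b = a(1-b) + (1-a)b`. -/
def bconv (a b : ℝ) : ℝ := a * (1 - b) + (1 - a) * b

/-- Binary Rényi entropy `h_α(p) = (1/(1-α))·log(p^α + (1-p)^α)`. -/
def binH (α p : ℝ) : ℝ := (1 / (1 - α)) * Real.log (p ^ α + (1 - p) ^ α)

/-- Inverse of `h_α` as a map `[0, log 2] → [0, 1/2]`. -/
def binHInv (α : ℝ) : ℝ → ℝ := Function.invFunOn (binH α) (Set.Icc 0 (1/2))

/-- `k_α^A(p) = (p^α + (1-p)^α)^{1/α}`. -/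
def kA (α p : ℝ) : ℝ := (p ^ α + (1 - p) ^ α) ^ (1/α)

/-- Inverse of `k_α^A`, mapping `I_α^A` back to `[0,1/2]`. -/
def kAInv (α : ℝ) : ℝ → ℝ := Function.invFunOn (kA α) (Set.Icc 0 (1/2))

/-- `δ_α^A = 2^{(1-α)/α}`. -/
def deltaA (α : ℝ) : ℝ := (2 : ℝ) ^ ((1 - α)/α)

/-- The closed interval `I_α^A` with endpoints `1` and `δ_α^A`. -/
def IA (α : ℝ) : Set ℝ := Set.uIcc 1 (deltaA α)

/-- `κ_α^A(x,y) = k_α^A((k_α^A)⁻¹(x) ∗ (k_α^A)⁻¹(y))`. -/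
def kkA (α x y : ℝ) : ℝ := kA α (bconv (kAInv α x) (kAInv α y))

/-- `k_α^H(p) = p^α + (1-p)^α`. -/
def kH (α p : ℝ) : ℝ := p ^ α + (1 - p) ^ α

/-- Inverse of `k_α^H`, mapping `I_α^H` back to `[0,1/2]`. -/
def kHInv (α : ℝ) : ℝ → ℝ := Function.invFunOn (kH α) (Set.Icc 0 (1/2))

/-- `δ_α^H = 2^{1-α}`. -/
def deltaH (α : ℝ) : ℝ := (2 : ℝ) ^ (1 - α)

/-- The closed interval `I_α^H` with endpoints `1` and `δ_α^H`. -/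
def IH (α : ℝ) : Set ℝ := Set.uIcc 1 (deltaH α)

/-- `κ_α^H(x,y) = k_α^H((k_α^H)⁻¹(x) ∗ (k_α^H)⁻¹(y))`. -/
def kkH (α x y : ℝ) : ℝ := kH α (bconv (kHInv α x) (kHInv α y))

/-- `ĥ_α(x,y) = h_α(h_α⁻¹(x) ∗ h_α⁻¹(y))`. -/
def hhat (α x y : ℝ) : ℝ := binH α (bconv (binHInv α x) (binHInv α y))

/-- Marginal on `Y` of a joint pmf. -/
def margY {X Y : Type*} [Fintype X] (p : X → Y → ℝ) (y : Y) : ℝ := ∑ x, p x y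

/-- A joint pmf: nonnegative entries summing to one. -/
def IsPmf {X Y : Type*} [Fintype X] [Fintype Y] (p : X → Y → ℝ) : Prop :=
  (∀ x y, 0 ≤ p x y) ∧ ∑ x, ∑ y, p x y = 1

/-- Arimoto conditional Rényi entropy `H_α^A(X|Y)`. -/
def condA (α : ℝ) {X Y : Type*} [Fintype X] [Fintype Y] (p : X → Y → ℝ) : ℝ :=
  (α / (1 - α)) * Real.log (∑ y, margY p y * (∑ x, (p x y / margY p y) ^ α) ^ (1/α))

/-- Hayashi conditional Rényi entropy `H_α^H(X|Y)`. -/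
def condH (α : ℝ) {X Y : Type*} [Fintype X] [Fintype Y] (p : X → Y → ℝ) : ℝ :=
  (1 / (1 - α)) * Real.log (∑ y, ∑ x, margY p y * (p x y / margY p y) ^ α)

/-- Jizba–Arimitsu conditional Rényi entropy `H_α^J(X|Y)`. -/
def condJ (α : ℝ) {X Y : Type*} [Fintype X] [Fintype Y] (p : X → Y → ℝ) : ℝ :=
  (1 / (1 - α)) * (Real.log (∑ x, ∑ y, p x y ^ α) - Real.log (∑ y, margY p y ^ α))

/-- Cachin conditional Rényi entropy `H_α^C(X|Y)`. -/
def condC (α : ℝ) {X Y : Type*} [Fintype X] [Fintype Y] (p : X → Y → ℝ) : ℝ :=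
  (1 / (1 - α)) * ∑ y, margY p y * Real.log (∑ x, (p x y / margY p y) ^ α)

/-- `K_α^A(X|Y) = exp(((1-α)/α)·H_α^A(X|Y))`. -/
def KA (α : ℝ) {X Y : Type*} [Fintype X] [Fintype Y] (p : X → Y → ℝ) : ℝ :=
  Real.exp (((1 - α)/α) * condA α p)

/-- `K_α^H(X|Y) = exp((1-α)·H_α^H(X|Y))`. -/
def KH (α : ℝ) {X Y : Type*} [Fintype X] [Fintype Y] (p : X → Y → ℝ) : ℝ :=
  Real.exp ((1 - α) * condH α p)

/-- `K_α^J(X|Y) = exp((1-α)·H_α^J(X|Y))`. -/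
def KJ (α : ℝ) {X Y : Type*} [Fintype X] [Fintype Y] (p : X → Y → ℝ) : ℝ :=
  Real.exp ((1 - α) * condJ α p)

/-- Joint pmf of `(X₁+X₂, (Y₁,Y₂))` for independent pairs `(X₁,Y₁)`, `(X₂,Y₂)`. -/
def combine {Y1 Y2 : Type*} (p1 : Bool → Y1 → ℝ) (p2 : Bool → Y2 → ℝ) :
    Bool → Y1 × Y2 → ℝ :=
  fun z y => ∑ x : Bool, p1 x y.1 * p2 (Bool.xor x z) y.2

/-- `k_∞^A(p) = max{p, 1-p}`. -/
def kInf (p : ℝ) : ℝ := max p (1 - p)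

/-- Binary min-entropy `h_∞(p) = -log max{p, 1-p}`. -/
def binHInf (p : ℝ) : ℝ := - Real.log (max p (1 - p))

/-- Inverse of the restriction of `h_∞` to `[0,1/2]`. -/
def binHInfInv : ℝ → ℝ := Function.invFunOn binHInf (Set.Icc 0 (1/2))

/-- Conditional min-entropy `H_∞(X|Y)` for binary `X`. -/
def condInf {Y : Type*} [Fintype Y] (p : Bool → Y → ℝ) : ℝ :=
  - Real.log (∑ y, margY p y * max (p false y / margY p y) (p true y / margY p y))

/-- Unconditional Rényi entropy of a finitely supported distribution. -/
def renyiEnt (α : ℝ) {X : Type*} [Fintype X] (p : X → ℝ) : ℝ :=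
  (1 / (1 - α)) * Real.log (∑ x, p x ^ α)

/-- Distribution of the mod-2 sum of two independent binary random variables. -/
def sumDist (p1 p2 : Bool → ℝ) : Bool → ℝ := fun z => ∑ x : Bool, p1 x * p2 (Bool.xor x z)

/-!
Write `k = k_α^A`, `δ = δ_α^A` and `κ = κ_α^A`. Since `k 0 = 1`, `k (1/2) = δ`, `0 ∗ b = b` and
`1/2 ∗ b = 1/2`, we have `κ(1, y) = y` and `κ(δ, y) = δ`; so convexity of `κ(·, y)` on the interval
`I` between `1` and `δ` puts `κ` below the chord through these two points, which is the bi-affine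
function `B(x, y) = (δ - x)(δ - y)/(1 - δ) + δ`. Given `Y₁ = y₁, Y₂ = y₂` the bit `X₁ + X₂` is
Bernoulli with parameter `p₁ ∗ p₂`, and `K(X|Y) = ∑_y p(y) k(p(1|y))`. Averaging `κ ≤ B` over
`(y₁, y₂)` and using that `B` is affine in each argument gives `K(X₁+X₂|Y₁Y₂) ≤ B(K₁, K₂)`, and
`H = (α/(1-α)) log K` turns this into the claim. Concavity reverses the chord inequality.
Since `k⁻¹` takes values in `[0, 1/2]`, conditional probabilities are first folded into that
interval, using `k(1 - p) = k(p)` and `(1 - a) ∗ b = 1 - a ∗ b`.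
-/

open Set

/-- The BEC bound on `K_α^A(X₁+X₂|Y₁Y₂)` as a function of `x = K₁` and `y = K₂`. -/
def becA (α x y : ℝ) : ℝ := (deltaA α - x) * (deltaA α - y) / (1 - deltaA α) + deltaA α

section Interval

variable {α : ℝ}

lemma deltaA_pos (α : ℝ) : 0 < deltaA α := rpow_pos_of_pos two_pos _

lemma one_sub_deltaA_ne_zero (hα : 0 < α) (hα1 : α ≠ 1) : 1 - deltaA α ≠ 0 := by
  rcases hα1.lt_or_gt with h | h
  · have : 1 < deltaA α := one_lt_rpow one_lt_two (div_pos (by linarith) hα)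
    linarith
  · have : deltaA α < 1 :=
      rpow_lt_one_of_one_lt_of_neg one_lt_two (div_neg_of_neg_of_pos (by linarith) hα)
    linarith

lemma pos_of_mem_IA {x : ℝ} (hx : x ∈ IA α) : 0 < x :=
  (lt_min one_pos (deltaA_pos α)).trans_le hx.1

lemma becA_segment (hα : 0 < α) (hα1 : α ≠ 1) {s t : ℝ} (hst : s + t = 1) (y : ℝ) :
    becA α (s * 1 + t * deltaA α) y = s * y + t * deltaA α := by
  have hδ := one_sub_deltaA_ne_zero hα hα1
  obtain rfl : t = 1 - s := by linarith
  rw [becA]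
  field_simp
  ring

lemma becA_mem_IA (hα : 0 < α) (hα1 : α ≠ 1) {x y : ℝ} (hx : x ∈ IA α) (hy : y ∈ IA α) :
    becA α x y ∈ IA α := by
  rw [IA, ← segment_eq_uIcc] at hx
  obtain ⟨s, t, hs, ht, hst, rfl⟩ := hx
  rw [smul_eq_mul, smul_eq_mul, becA_segment hα hα1 hst]
  exact convex_uIcc 1 (deltaA α) hy right_mem_uIcc hs ht hst

lemma sum_sum_mul_becA {ι κ : Type*} [Fintype ι] [Fintype κ] (α : ℝ) {w : ι → ℝ} {v : κ → ℝ}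
    (hw : ∑ i, w i = 1) (hv : ∑ j, v j = 1) (x : ι → ℝ) (y : κ → ℝ) :
    ∑ i, ∑ j, w i * v j * becA α (x i) (y j) =
      becA α (∑ i, w i * x i) (∑ j, v j * y j) := by
  have hx : deltaA α - ∑ i, w i * x i = ∑ i, w i * (deltaA α - x i) := by
    simp [mul_sub, Finset.sum_sub_distrib, ← Finset.sum_mul, hw]
  have hy : deltaA α - ∑ j, v j * y j = ∑ j, v j * (deltaA α - y j) := by
    simp [mul_sub, Finset.sum_sub_distrib, ← Finset.sum_mul, hv]
  have hδ : deltaA α = ∑ i, ∑ j, w i * v j * deltaA α := by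
    simp [← Finset.sum_mul, ← Finset.mul_sum, hw, hv]
  rw [becA, hx, hy, Finset.sum_mul_sum, Finset.sum_div, hδ, ← Finset.sum_add_distrib]
  refine Finset.sum_congr rfl fun i _ => ?_
  rw [Finset.sum_div, ← Finset.sum_add_distrib]
  refine Finset.sum_congr rfl fun j _ => ?_
  rw [becA, ← hδ]
  ring

end Interval

section BinaryFunction

variable {α : ℝ}

lemma kA_one_sub (α p : ℝ) : kA α (1 - p) = kA α p := by
  rw [kA, sub_sub_cancel, add_comm, kA]

lemma kA_min_one_sub (α p : ℝ) : kA α (min p (1 - p)) = kA α p := by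
  rcases min_choice p (1 - p) with h | h <;> rw [h]
  exact kA_one_sub α p

lemma kA_zero (hα : 0 < α) : kA α 0 = 1 := by
  rw [kA, zero_rpow hα.ne', sub_zero, one_rpow, zero_add, one_rpow]

lemma kA_half (α : ℝ) : kA α (1 / 2) = deltaA α := by
  have hsum : ((1 : ℝ) / 2) ^ α + (1 - 1 / 2) ^ α = 2 ^ (1 - α) := by
    rw [show (1 : ℝ) - 1 / 2 = 1 / 2 by norm_num, ← two_mul, div_rpow zero_le_one zero_le_two,
      one_rpow, mul_one_div, rpow_sub two_pos, rpow_one]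
  rw [kA, hsum, ← rpow_mul zero_le_two, deltaA, mul_one_div]

lemma kH_nonneg {p : ℝ} (hp : p ∈ Icc (0 : ℝ) 1) : 0 ≤ kH α p :=
  add_nonneg (rpow_nonneg hp.1 α) (rpow_nonneg (sub_nonneg.2 hp.2) α)

lemma continuous_kH (hα : 0 < α) : Continuous (kH α) :=
  (continuous_id.rpow_const fun _ => Or.inr hα.le).add
    ((continuous_const.sub continuous_id).rpow_const fun _ => Or.inr hα.le)

lemma hasDerivAt_kH {x : ℝ} (hx : x ∈ Ioo (0 : ℝ) 1) :
    HasDerivAt (kH α) (α * x ^ (α - 1) - α * (1 - x) ^ (α - 1)) x := by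
  have h1 := hasDerivAt_rpow_const (p := α) (Or.inl hx.1.ne')
  have h2 := (hasDerivAt_rpow_const (p := α) (Or.inl (sub_pos.2 hx.2).ne')).comp x
    ((hasDerivAt_id x).const_sub 1)
  exact (h1.add h2).congr_deriv (by ring)

lemma kH_strictMonoOn (hα : 0 < α) (h : α < 1) : StrictMonoOn (kH α) (Icc 0 (1 / 2)) := by
  refine strictMonoOn_of_deriv_pos (convex_Icc _ _) (continuous_kH hα).continuousOn
    fun x hx => ?_
  rw [interior_Icc] at hx
  rw [(hasDerivAt_kH ⟨hx.1, by linarith [hx.2]⟩).deriv, sub_pos]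
  exact mul_lt_mul_of_pos_left (rpow_lt_rpow_of_neg hx.1 (by linarith [hx.2]) (by linarith)) hα

lemma kH_strictAntiOn (h : 1 < α) : StrictAntiOn (kH α) (Icc 0 (1 / 2)) := by
  refine strictAntiOn_of_deriv_neg (convex_Icc _ _) (continuous_kH (by linarith)).continuousOn
    fun x hx => ?_
  rw [interior_Icc] at hx
  rw [(hasDerivAt_kH ⟨hx.1, by linarith [hx.2]⟩).deriv, sub_neg]
  exact mul_lt_mul_of_pos_left (rpow_lt_rpow hx.1.le (by linarith [hx.2]) (by linarith))
    (by linarith)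

lemma kA_strictMonoOn (hα : 0 < α) (h : α < 1) : StrictMonoOn (kA α) (Icc 0 (1 / 2)) :=
  fun _ hp _ hq hpq => rpow_lt_rpow (kH_nonneg ⟨hp.1, by linarith [hp.2]⟩)
    (kH_strictMonoOn hα h hp hq hpq) (by positivity)

lemma kA_strictAntiOn (h : 1 < α) : StrictAntiOn (kA α) (Icc 0 (1 / 2)) :=
  fun _ hp _ hq hpq => rpow_lt_rpow (kH_nonneg ⟨hq.1, by linarith [hq.2]⟩)
    (kH_strictAntiOn h hp hq hpq) (by positivity)

lemma kA_injOn (hα : 0 < α) (hα1 : α ≠ 1) : InjOn (kA α) (Icc 0 (1 / 2)) := by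
  rcases hα1.lt_or_gt with h | h
  exacts [(kA_strictMonoOn hα h).injOn, (kA_strictAntiOn h).injOn]

lemma kA_mapsTo_IA (hα : 0 < α) (hα1 : α ≠ 1) : MapsTo (kA α) (Icc 0 (1 / 2)) (IA α) := by
  have hI : Icc (0 : ℝ) (1 / 2) = uIcc 0 (1 / 2) := (uIcc_of_le (by norm_num)).symm
  have h : MapsTo (kA α) (uIcc 0 (1 / 2)) (uIcc (kA α 0) (kA α (1 / 2))) := by
    rcases hα1.lt_or_gt with h | h
    · exact (hI ▸ (kA_strictMonoOn hα h).monotoneOn).mapsTo_uIcc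
    · exact (hI ▸ (kA_strictAntiOn h).antitoneOn).mapsTo_uIcc
  rwa [kA_zero hα, kA_half, ← hI] at h

lemma min_one_sub_mem_Icc {p : ℝ} (hp : p ∈ Icc (0 : ℝ) 1) :
    min p (1 - p) ∈ Icc (0 : ℝ) (1 / 2) :=
  ⟨le_min hp.1 (sub_nonneg.2 hp.2), min_le_iff.2 (by by_contra! h; linarith [h.1, h.2])⟩

lemma kA_mem_IA (hα : 0 < α) (hα1 : α ≠ 1) {p : ℝ} (hp : p ∈ Icc (0 : ℝ) 1) : kA α p ∈ IA α :=
  kA_min_one_sub α p ▸ kA_mapsTo_IA hα hα1 (min_one_sub_mem_Icc hp)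

lemma kAInv_kA (hα : 0 < α) (hα1 : α ≠ 1) {p : ℝ} (hp : p ∈ Icc (0 : ℝ) (1 / 2)) :
    kAInv α (kA α p) = p :=
  (kA_injOn hα hα1).leftInvOn_invFunOn hp

lemma kkA_kA_kA (hα : 0 < α) (hα1 : α ≠ 1) {a b : ℝ} (ha : a ∈ Icc (0 : ℝ) (1 / 2))
    (hb : b ∈ Icc (0 : ℝ) (1 / 2)) : kkA α (kA α a) (kA α b) = kA α (bconv a b) := by
  rw [kkA, kAInv_kA hα hα1 ha, kAInv_kA hα hα1 hb]

lemma kkA_one_left (hα : 0 < α) (hα1 : α ≠ 1) {b : ℝ} (hb : b ∈ Icc (0 : ℝ) (1 / 2)) :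
    kkA α 1 (kA α b) = kA α b := by
  rw [← kA_zero hα, kkA_kA_kA hα hα1 (by norm_num) hb, bconv]
  ring_nf

lemma kkA_deltaA_left (hα : 0 < α) (hα1 : α ≠ 1) {b : ℝ} (hb : b ∈ Icc (0 : ℝ) (1 / 2)) :
    kkA α (deltaA α) (kA α b) = deltaA α := by
  rw [← kA_half, kkA_kA_kA hα hα1 (by norm_num) hb, bconv]
  ring_nf

lemma kA_bconv_min_one_sub (α a b : ℝ) :
    kA α (bconv (min a (1 - a)) (min b (1 - b))) = kA α (bconv a b) := by
  have h : bconv (1 - a) b = 1 - bconv a b ∧ bconv a (1 - b) = 1 - bconv a b ∧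
      bconv (1 - a) (1 - b) = bconv a b := by
    simp only [bconv]; refine ⟨?_, ?_, ?_⟩ <;> ring
  rcases min_choice a (1 - a) with ha | ha <;> rcases min_choice b (1 - b) with hb | hb <;>
    simp only [ha, hb, h, kA_one_sub]

end BinaryFunction

section Chord

variable {α : ℝ}

lemma kkA_le_becA (hα : 0 < α) (hα1 : α ≠ 1) {b x : ℝ} (hb : b ∈ Icc (0 : ℝ) (1 / 2))
    (hcv : ConvexOn ℝ (IA α) fun x => kkA α x (kA α b)) (hx : x ∈ IA α) :
    kkA α x (kA α b) ≤ becA α x (kA α b) := by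
  rw [IA, ← segment_eq_uIcc] at hx
  obtain ⟨s, t, hs, ht, hst, rfl⟩ := hx
  have h := hcv.2 left_mem_uIcc right_mem_uIcc hs ht hst
  simp only [smul_eq_mul, kkA_one_left hα hα1 hb, kkA_deltaA_left hα hα1 hb] at h ⊢
  rwa [becA_segment hα hα1 hst]

lemma becA_le_kkA (hα : 0 < α) (hα1 : α ≠ 1) {b x : ℝ} (hb : b ∈ Icc (0 : ℝ) (1 / 2))
    (hcv : ConcaveOn ℝ (IA α) fun x => kkA α x (kA α b)) (hx : x ∈ IA α) :
    becA α x (kA α b) ≤ kkA α x (kA α b) := by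
  rw [IA, ← segment_eq_uIcc] at hx
  obtain ⟨s, t, hs, ht, hst, rfl⟩ := hx
  have h := hcv.2 left_mem_uIcc right_mem_uIcc hs ht hst
  simp only [smul_eq_mul, kkA_one_left hα hα1 hb, kkA_deltaA_left hα hα1 hb] at h ⊢
  rwa [becA_segment hα hα1 hst]

lemma kA_bconv_le_becA (hα : 0 < α) (hα1 : α ≠ 1)
    (hcv : ∀ y ∈ IA α, ConvexOn ℝ (IA α) fun x => kkA α x y) {a b : ℝ}
    (ha : a ∈ Icc (0 : ℝ) 1) (hb : b ∈ Icc (0 : ℝ) 1) :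
    kA α (bconv a b) ≤ becA α (kA α a) (kA α b) := by
  have ha' := min_one_sub_mem_Icc ha
  have hb' := min_one_sub_mem_Icc hb
  rw [← kA_bconv_min_one_sub, ← kA_min_one_sub α a, ← kA_min_one_sub α b,
    ← kkA_kA_kA hα hα1 ha' hb']
  exact kkA_le_becA hα hα1 hb' (hcv _ (kA_mapsTo_IA hα hα1 hb')) (kA_mapsTo_IA hα hα1 ha')

lemma becA_le_kA_bconv (hα : 0 < α) (hα1 : α ≠ 1)
    (hcv : ∀ y ∈ IA α, ConcaveOn ℝ (IA α) fun x => kkA α x y) {a b : ℝ}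
    (ha : a ∈ Icc (0 : ℝ) 1) (hb : b ∈ Icc (0 : ℝ) 1) :
    becA α (kA α a) (kA α b) ≤ kA α (bconv a b) := by
  have ha' := min_one_sub_mem_Icc ha
  have hb' := min_one_sub_mem_Icc hb
  rw [← kA_bconv_min_one_sub, ← kA_min_one_sub α a, ← kA_min_one_sub α b,
    ← kkA_kA_kA hα hα1 ha' hb']
  exact becA_le_kkA hα hα1 hb' (hcv _ (kA_mapsTo_IA hα hα1 hb')) (kA_mapsTo_IA hα hα1 ha')

end Chord

section BinaryPmf

variable {α : ℝ} {Y : Type*}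

lemma margY_bool (p : Bool → Y → ℝ) (y : Y) : margY p y = p false y + p true y :=
  (Fintype.sum_bool _).trans (add_comm _ _)

lemma IsPmf.margY_nonneg [Fintype Y] {p : Bool → Y → ℝ} (hp : IsPmf p) (y : Y) : 0 ≤ margY p y :=
  Finset.sum_nonneg fun x _ => hp.1 x y

lemma IsPmf.sum_margY [Fintype Y] {p : Bool → Y → ℝ} (hp : IsPmf p) : ∑ y, margY p y = 1 :=
  Finset.sum_comm.trans hp.2

lemma IsPmf.div_margY_mem_Icc [Fintype Y] {p : Bool → Y → ℝ} (hp : IsPmf p) (y : Y) :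
    p true y / margY p y ∈ Icc (0 : ℝ) 1 :=
  ⟨div_nonneg (hp.1 true y) (hp.margY_nonneg y),
    div_le_one_of_le₀ (by linarith [margY_bool p y, hp.1 false y]) (hp.margY_nonneg y)⟩

lemma margY_mul_rpow_sum_eq (α : ℝ) (p : Bool → Y → ℝ) (y : Y) :
    margY p y * (∑ x, (p x y / margY p y) ^ α) ^ (1 / α) =
      margY p y * kA α (p true y / margY p y) := by
  rcases eq_or_ne (margY p y) 0 with hq | hq
  · simp [hq]
  have hfalse : p false y / margY p y = 1 - p true y / margY p y := by
    rw [eq_sub_iff_add_eq, ← add_div, ← margY_bool, div_self hq]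
  rw [Fintype.sum_bool, hfalse, kA]

lemma IsPmf.sum_margY_mul_kA_mem_IA [Fintype Y] (hα : 0 < α) (hα1 : α ≠ 1) {p : Bool → Y → ℝ}
    (hp : IsPmf p) : ∑ y, margY p y * kA α (p true y / margY p y) ∈ IA α :=
  (convex_uIcc _ _).sum_mem (fun y _ => hp.margY_nonneg y) hp.sum_margY
    fun y _ => kA_mem_IA hα hα1 (hp.div_margY_mem_Icc y)

lemma IsPmf.KA_eq_sum [Fintype Y] (hα : 0 < α) (hα1 : α ≠ 1) {p : Bool → Y → ℝ} (hp : IsPmf p) :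
    KA α p = ∑ y, margY p y * kA α (p true y / margY p y) := by
  have hα' : 1 - α ≠ 0 := sub_ne_zero.2 hα1.symm
  have hc : (1 - α) / α * (α / (1 - α)) = 1 := by field_simp
  simp only [KA, condA, margY_mul_rpow_sum_eq]
  rw [← mul_assoc, hc, one_mul,
    Real.exp_log (pos_of_mem_IA (hp.sum_margY_mul_kA_mem_IA hα hα1))]

lemma IsPmf.KA_mem_IA [Fintype Y] (hα : 0 < α) (hα1 : α ≠ 1) {p : Bool → Y → ℝ} (hp : IsPmf p) :
    KA α p ∈ IA α :=
  hp.KA_eq_sum hα hα1 ▸ hp.sum_margY_mul_kA_mem_IA hα hα1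

lemma condA_eq_mul_log_KA [Fintype Y] (hα : α ≠ 0) (hα1 : α ≠ 1) (p : Bool → Y → ℝ) :
    condA α p = α / (1 - α) * Real.log (KA α p) := by
  have hα' : 1 - α ≠ 0 := sub_ne_zero.2 hα1.symm
  rw [KA, Real.log_exp]
  field_simp

end BinaryPmf

section Combine

variable {α : ℝ} {Y1 Y2 : Type*}

lemma margY_combine (p1 : Bool → Y1 → ℝ) (p2 : Bool → Y2 → ℝ) (y1 : Y1) (y2 : Y2) :
    margY (combine p1 p2) (y1, y2) = margY p1 y1 * margY p2 y2 := by
  simp only [margY_bool, combine, Fintype.sum_bool, Bool.xor_false, Bool.xor_true, Bool.not_true,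
    Bool.not_false]
  ring

lemma combine_true_div_margY (p1 : Bool → Y1 → ℝ) (p2 : Bool → Y2 → ℝ) {y1 : Y1} {y2 : Y2}
    (hq1 : margY p1 y1 ≠ 0) (hq2 : margY p2 y2 ≠ 0) :
    combine p1 p2 true (y1, y2) / margY (combine p1 p2) (y1, y2) =
      bconv (p1 true y1 / margY p1 y1) (p2 true y2 / margY p2 y2) := by
  rw [margY_combine, bconv]
  simp only [margY_bool] at hq1 hq2 ⊢
  simp only [combine, Fintype.sum_bool, Bool.xor_true, Bool.not_true, Bool.not_false]
  field_simp
  ring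

lemma isPmf_combine [Fintype Y1] [Fintype Y2] {p1 : Bool → Y1 → ℝ} {p2 : Bool → Y2 → ℝ}
    (hp1 : IsPmf p1) (hp2 : IsPmf p2) : IsPmf (combine p1 p2) := by
  refine ⟨fun z y => Finset.sum_nonneg fun x _ => mul_nonneg (hp1.1 x y.1) (hp2.1 _ y.2), ?_⟩
  rw [Finset.sum_comm, Fintype.sum_prod_type]
  simp only [← margY.eq_def, margY_combine, ← Finset.sum_mul_sum, hp1.sum_margY, hp2.sum_margY,
    mul_one]

lemma IsPmf.KA_combine [Fintype Y1] [Fintype Y2] (hα : 0 < α) (hα1 : α ≠ 1)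
    {p1 : Bool → Y1 → ℝ} {p2 : Bool → Y2 → ℝ} (hp1 : IsPmf p1) (hp2 : IsPmf p2) :
    KA α (combine p1 p2) = ∑ y1, ∑ y2, margY p1 y1 * margY p2 y2 *
      kA α (bconv (p1 true y1 / margY p1 y1) (p2 true y2 / margY p2 y2)) := by
  rw [(isPmf_combine hp1 hp2).KA_eq_sum hα hα1, Fintype.sum_prod_type]
  refine Finset.sum_congr rfl fun y1 _ => Finset.sum_congr rfl fun y2 _ => ?_
  rw [margY_combine]
  rcases eq_or_ne (margY p1 y1) 0 with hq1 | hq1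
  · simp [hq1]
  rcases eq_or_ne (margY p2 y2) 0 with hq2 | hq2
  · simp [hq2]
  rw [← margY_combine, combine_true_div_margY p1 p2 hq1 hq2, margY_combine]

lemma KA_combine_le_becA [Fintype Y1] [Fintype Y2] (hα : 0 < α) (hα1 : α ≠ 1)
    (hcv : ∀ y ∈ IA α, ConvexOn ℝ (IA α) fun x => kkA α x y)
    {p1 : Bool → Y1 → ℝ} {p2 : Bool → Y2 → ℝ} (hp1 : IsPmf p1) (hp2 : IsPmf p2) :
    KA α (combine p1 p2) ≤ becA α (KA α p1) (KA α p2) := by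
  rw [hp1.KA_combine hα hα1 hp2, hp1.KA_eq_sum hα hα1, hp2.KA_eq_sum hα hα1,
    ← sum_sum_mul_becA α hp1.sum_margY hp2.sum_margY]
  gcongr with y1 _ y2 _
  · exact mul_nonneg (hp1.margY_nonneg y1) (hp2.margY_nonneg y2)
  · exact kA_bconv_le_becA hα hα1 hcv (hp1.div_margY_mem_Icc y1) (hp2.div_margY_mem_Icc y2)

lemma becA_le_KA_combine [Fintype Y1] [Fintype Y2] (hα : 0 < α) (hα1 : α ≠ 1)
    (hcv : ∀ y ∈ IA α, ConcaveOn ℝ (IA α) fun x => kkA α x y)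
    {p1 : Bool → Y1 → ℝ} {p2 : Bool → Y2 → ℝ} (hp1 : IsPmf p1) (hp2 : IsPmf p2) :
    becA α (KA α p1) (KA α p2) ≤ KA α (combine p1 p2) := by
  rw [hp1.KA_combine hα hα1 hp2, hp1.KA_eq_sum hα hα1, hp2.KA_eq_sum hα hα1,
    ← sum_sum_mul_becA α hp1.sum_margY hp2.sum_margY]
  gcongr with y1 _ y2 _
  · exact mul_nonneg (hp1.margY_nonneg y1) (hp2.margY_nonneg y2)
  · exact becA_le_kA_bconv hα hα1 hcv (hp1.div_margY_mem_Icc y1) (hp2.div_margY_mem_Icc y2)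

end Combine

/-- BEC-bound for the Arimoto conditional Rényi entropy. -/
theorem stmt_2 (α : ℝ) (hα : 0 < α) (hα1 : α ≠ 1)
    {Y1 Y2 : Type*} [Fintype Y1] [Fintype Y2]
    (p1 : Bool → Y1 → ℝ) (p2 : Bool → Y2 → ℝ)
    (hp1 : IsPmf p1) (hp2 : IsPmf p2) :
    (((∀ y ∈ IA α, ConvexOn ℝ (IA α) (fun x => kkA α x y)) ∧
      (∀ x ∈ IA α, ConvexOn ℝ (IA α) (fun y => kkA α x y))) →
      (1 < α → (α / (1 - α)) * Real.log
          ((deltaA α - KA α p1) * (deltaA α - KA α p2) / (1 - deltaA α) + deltaA α) ≤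
          condA α (combine p1 p2)) ∧
      (α < 1 → condA α (combine p1 p2) ≤ (α / (1 - α)) * Real.log
          ((deltaA α - KA α p1) * (deltaA α - KA α p2) / (1 - deltaA α) + deltaA α))) ∧
    (((∀ y ∈ IA α, ConcaveOn ℝ (IA α) (fun x => kkA α x y)) ∧
      (∀ x ∈ IA α, ConcaveOn ℝ (IA α) (fun y => kkA α x y))) →
      (1 < α → condA α (combine p1 p2) ≤ (α / (1 - α)) * Real.log
          ((deltaA α - KA α p1) * (deltaA α - KA α p2) / (1 - deltaA α) + deltaA α)) ∧
      (α < 1 → (α / (1 - α)) * Real.log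
          ((deltaA α - KA α p1) * (deltaA α - KA α p2) / (1 - deltaA α) + deltaA α) ≤
          condA α (combine p1 p2))) := by
  have hcond := condA_eq_mul_log_KA hα.ne' hα1 (combine p1 p2)
  have hbec : 0 < becA α (KA α p1) (KA α p2) :=
    pos_of_mem_IA (becA_mem_IA hα hα1 (hp1.KA_mem_IA hα hα1) (hp2.KA_mem_IA hα hα1))
  have hneg (h : 1 < α) : α / (1 - α) ≤ 0 := div_nonpos_of_nonneg_of_nonpos hα.le (by linarith)
  have hpos (h : α < 1) : 0 ≤ α / (1 - α) := div_nonneg hα.le (by linarith)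
  refine ⟨fun ⟨hcv, _⟩ => ?_, fun ⟨hcv, _⟩ => ?_⟩
  · have hlog := Real.log_le_log (exp_pos _) (KA_combine_le_becA hα hα1 hcv hp1 hp2)
    rw [hcond]
    exact ⟨fun h => mul_le_mul_of_nonpos_left hlog (hneg h),
      fun h => mul_le_mul_of_nonneg_left hlog (hpos h)⟩
  · have hlog := Real.log_le_log hbec (becA_le_KA_combine hα hα1 hcv hp1 hp2)
    rw [hcond]
    exact ⟨fun h => mul_le_mul_of_nonpos_left hlog (hneg h),
      fun h => mul_le_mul_of_nonneg_left hlog (hpos h)⟩
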